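/- arXiv:1907.05520 — 3 statements merged into one kernel-verified Lean document; each statement's English description precedes it below -/
import Mathlib

section
/- Let B ⊆ ℝ^n be a compact connected set, let ε, η > 0, and let D̄ = {x ∈ B : ‖∇g(x)‖₂ ≤ ε}. Assume (i) |λ_min(∇²g(x))| ≥ η for all x ∈ D̄; (ii) ‖∇f(x) − ∇g(x)‖₂ ≤ ε/2 for all x ∈ B; (iii) ‖∇²f(x) − ∇²g(x)‖₂ ≤ η/2 for all x ∈ B. Let D be a maximal connected compact subset of D̄ with C² boundary. If g has a strict saddle point in D, then every critical point x of f in D satisfies λ_min(∇²f(x)) ≤ −η/2; in particular, every saddle point of f in D is a strict saddle point. -/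
open Set
open scoped RealInnerProductSpace

/-
The Hessian of `g` is `D(∇g)`, and `λ_min` is 1-Lipschitz in the operator norm, so
`x ↦ λ_min(∇²g x)` is continuous. On the connected set `D` it avoids `(-η, η)` and is negative at
the saddle point, hence it is `≤ -η` throughout `D`; Weyl's inequality
`λ_min(∇²f) ≤ λ_min(∇²g) + ‖∇²f - ∇²g‖` then gives `λ_min(∇²f) ≤ -η + η/2` on `D`.
-/

/-- The smallest eigenvalue of a (self-adjoint) continuous linear operator on ℝ^n,
expressed as the infimum of the Rayleigh quotient over the unit sphere. -/
noncomputable def lambdaMin {n : ℕ}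
    (A : EuclideanSpace ℝ (Fin n) →L[ℝ] EuclideanSpace ℝ (Fin n)) : ℝ :=
  sInf {r : ℝ | ∃ v : EuclideanSpace ℝ (Fin n), ‖v‖ = 1 ∧ r = ⟪v, A v⟫}

theorem ContDiff.gradient {E : Type*} [NormedAddCommGroup E] [InnerProductSpace ℝ E]
    [CompleteSpace E] {f : E → ℝ} {m k : WithTop ℕ∞} (hf : ContDiff ℝ k f) (hmk : m + 1 ≤ k) :
    ContDiff ℝ m (gradient f) :=
  (InnerProductSpace.toDual ℝ E).symm.contDiff.comp (hf.fderiv_right hmk)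

theorem IsPreconnected.le_neg_of_le_abs {α : Type*} [TopologicalSpace α] {s : Set α}
    (hs : IsPreconnected s) {φ : α → ℝ} (hφ : ContinuousOn φ s) {η : ℝ} (hη : 0 < η)
    (habs : ∀ x ∈ s, η ≤ |φ x|) {x₀ : α} (hx₀ : x₀ ∈ s) (hneg : φ x₀ < 0) :
    ∀ x ∈ s, φ x ≤ -η := by
  intro x hx
  by_contra! hgt
  have hpos : 0 ≤ φ x := by
    by_contra! h
    linarith [abs_of_neg h ▸ habs x hx]
  obtain ⟨z, hz, hz0⟩ := hs.intermediate_value hx₀ hx hφ ⟨hneg.le, hpos⟩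
  have := habs z hz
  rw [hz0, abs_zero] at this
  linarith

namespace lambdaMin

variable {n : ℕ}

theorem bddBelow (A : EuclideanSpace ℝ (Fin n) →L[ℝ] EuclideanSpace ℝ (Fin n)) :
    BddBelow {r : ℝ | ∃ v : EuclideanSpace ℝ (Fin n), ‖v‖ = 1 ∧ r = ⟪v, A v⟫} := by
  refine ⟨-‖A‖, ?_⟩
  rintro r ⟨v, hv, rfl⟩
  have := (abs_le.1 (abs_real_inner_le_norm v (A v))).1
  have := A.le_opNorm v
  rw [hv] at *
  linarith

theorem le_inner (A : EuclideanSpace ℝ (Fin n) →L[ℝ] EuclideanSpace ℝ (Fin n))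
    {v : EuclideanSpace ℝ (Fin n)} (hv : ‖v‖ = 1) : lambdaMin A ≤ ⟪v, A v⟫ :=
  csInf_le (bddBelow A) ⟨v, hv, rfl⟩

theorem inner_sub_le_norm_sub (A C : EuclideanSpace ℝ (Fin n) →L[ℝ] EuclideanSpace ℝ (Fin n))
    {v : EuclideanSpace ℝ (Fin n)} (hv : ‖v‖ = 1) : ⟪v, A v⟫ - ⟪v, C v⟫ ≤ ‖A - C‖ := by
  rw [← inner_sub_right, ← sub_apply]
  calc ⟪v, (A - C) v⟫ ≤ ‖v‖ * ‖(A - C) v‖ := real_inner_le_norm _ _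
    _ ≤ ‖v‖ * (‖A - C‖ * ‖v‖) := by gcongr; exact (A - C).le_opNorm v
    _ = ‖A - C‖ := by rw [hv]; ring

/-- Weyl's inequality for `λ_min`. In dimension `0` the unit sphere is empty and `lambdaMin` is the
junk value `sInf ∅ = 0`, for which the inequality still holds. -/
theorem le_add_norm_sub (A C : EuclideanSpace ℝ (Fin n) →L[ℝ] EuclideanSpace ℝ (Fin n)) :
    lambdaMin A ≤ lambdaMin C + ‖A - C‖ := by
  by_cases hsphere : ∃ v : EuclideanSpace ℝ (Fin n), ‖v‖ = 1
  · obtain ⟨v₀, hv₀⟩ := hsphere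
    rw [← sub_le_iff_le_add]
    refine le_csInf ⟨_, v₀, hv₀, rfl⟩ ?_
    rintro r ⟨v, hv, rfl⟩
    linarith [le_inner A hv, inner_sub_le_norm_sub A C hv]
  · push Not at hsphere
    have hempty (A' : EuclideanSpace ℝ (Fin n) →L[ℝ] EuclideanSpace ℝ (Fin n)) :
        lambdaMin A' = 0 := by
      have : {r : ℝ | ∃ v : EuclideanSpace ℝ (Fin n), ‖v‖ = 1 ∧ r = ⟪v, A' v⟫} = ∅ := by
        simp [hsphere]
      rw [lambdaMin, this, Real.sInf_empty]
    rw [hempty A, hempty C, zero_add]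
    exact norm_nonneg _

theorem lipschitzWith_one :
    LipschitzWith 1 (lambdaMin : (EuclideanSpace ℝ (Fin n) →L[ℝ] EuclideanSpace ℝ (Fin n)) → ℝ) :=
  LipschitzWith.of_le_add fun A C => by
    simpa [dist_eq_norm] using le_add_norm_sub A C

end lambdaMin

theorem stmt_1_general {n : ℕ} (f g : EuclideanSpace ℝ (Fin n) → ℝ)
    (hg : ContDiff ℝ 2 g)
    (B : Set (EuclideanSpace ℝ (Fin n)))
    (ε η : ℝ) (hη : 0 < η)
    (Dbar : Set (EuclideanSpace ℝ (Fin n)))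
    (hDbar : Dbar = {x ∈ B | ‖gradient g x‖ ≤ ε})
    (h1 : ∀ x ∈ Dbar, η ≤ |lambdaMin (fderiv ℝ (gradient g) x)|)
    (h3 : ∀ x ∈ B, ‖fderiv ℝ (gradient f) x - fderiv ℝ (gradient g) x‖ ≤ η / 2)
    (D : Set (EuclideanSpace ℝ (Fin n))) (hDsub : D ⊆ Dbar)
    (hDconn : IsConnected D)
    (hsaddle : ∃ x ∈ D, gradient g x = 0 ∧ lambdaMin (fderiv ℝ (gradient g) x) < 0) :
    ∀ x ∈ D, gradient f x = 0 → lambdaMin (fderiv ℝ (gradient f) x) ≤ -η / 2 := by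
  obtain ⟨x₀, hx₀D, -, hx₀neg⟩ := hsaddle
  have hcont : Continuous fun x => lambdaMin (fderiv ℝ (gradient g) x) :=
    lambdaMin.lipschitzWith_one.continuous.comp
      ((hg.gradient (by norm_num)).continuous_fderiv one_ne_zero)
  have hg_neg := hDconn.isPreconnected.le_neg_of_le_abs hcont.continuousOn hη
    (fun x hx => h1 x (hDsub hx)) hx₀D hx₀neg
  intro x hxD _
  have hxB : x ∈ B := (hDbar ▸ hDsub hxD).1
  linarith [lambdaMin.le_add_norm_sub (fderiv ℝ (gradient f) x) (fderiv ℝ (gradient g) x),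
    h3 x hxB, hg_neg x hxD]

theorem stmt_1 {n : ℕ} (f g : EuclideanSpace ℝ (Fin n) → ℝ)
    (hf : ContDiff ℝ 2 f) (hg : ContDiff ℝ 2 g)
    (B : Set (EuclideanSpace ℝ (Fin n))) (hBc : IsCompact B) (hBconn : IsConnected B)
    (ε η : ℝ) (hε : 0 < ε) (hη : 0 < η)
    (Dbar : Set (EuclideanSpace ℝ (Fin n)))
    (hDbar : Dbar = {x ∈ B | ‖gradient g x‖ ≤ ε})
    (h1 : ∀ x ∈ Dbar, η ≤ |lambdaMin (fderiv ℝ (gradient g) x)|)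
    (h2 : ∀ x ∈ B, ‖gradient f x - gradient g x‖ ≤ ε / 2)
    (h3 : ∀ x ∈ B, ‖fderiv ℝ (gradient f) x - fderiv ℝ (gradient g) x‖ ≤ η / 2)
    (D : Set (EuclideanSpace ℝ (Fin n))) (hDsub : D ⊆ Dbar)
    (hDconn : IsConnected D) (hDcomp : IsCompact D)
    (hDmax : ∀ D' : Set (EuclideanSpace ℝ (Fin n)),
      D ⊆ D' → D' ⊆ Dbar → IsConnected D' → D' = D)
    (hsaddle : ∃ x ∈ D, gradient g x = 0 ∧ lambdaMin (fderiv ℝ (gradient g) x) < 0) :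
    ∀ x ∈ D, gradient f x = 0 → lambdaMin (fderiv ℝ (gradient f) x) ≤ -η / 2 :=
  stmt_1_general f g hg B ε η hη Dbar hDbar h1 h3 D hDsub hDconn hsaddle
end

section
/- Let E ⊆ ℝ^n be a connected compact set with C² boundary ∂E, and let f, g : A₀ → ℝ be C² functions on an open set A₀ ⊇ E. Assume (i) for all x ∈ ∂E and all t ∈ [0,1], t∇f(x) + (1−t)∇g(x) ≠ 0; (ii) ‖∇²f(x) − ∇²g(x)‖₂ ≤ η/2 for all x ∈ E; (iii) |λ_min(∇²g(x))| ≥ η for all x ∈ E, where η > 0. Then both f and g have at most finitely many local minima in E, and the number of local minima of f in E equals the number of local minima of g in E. -/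
/-!
Since `lambdaMin` is 1-Lipschitz and `E` is connected, `lambdaMin (∇²g)` is either `≥ η` on all
of `E` or `≤ -η` on all of `E`, and by (ii) `lambdaMin (∇²f)` is then `≥ η / 2`, resp. `≤ -η / 2`.
In the second case neither function has a local minimum in `E`, since the Hessian at a local
minimum is positive semidefinite. In the first case both Hessians are uniformly positive near `E`,
so every `G t = t • ∇f + (1 - t) • ∇g`, `t ∈ [0, 1]`, is strongly monotone on small balls around
`E`, and the local minima of `f` and `g` in `E` are exactly the zeros of `G 1` and `G 0` there.
Strong monotonicity separates these zeros uniformly, so there are finitely many; minimising the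
potential `t * f + (1 - t) * g` on small balls shows that each zero of `G t₀` persists as a unique
zero of `G t` for `t` close to `t₀`, while (i) keeps the zeros away from `frontier E`. The number of
zeros is therefore locally constant, hence constant, on `[0, 1]`.
-/

open Set
open scoped RealInnerProductSpace

open Metric InnerProductSpace Filter Topology

theorem le_sub_of_hasDerivAt_of_le {f f' : ℝ → ℝ} {C : ℝ}
    (hf : ∀ s ∈ Icc (0 : ℝ) 1, HasDerivAt f (f' s) s) (hC : ∀ s ∈ Ioo (0 : ℝ) 1, C ≤ f' s) :
    C ≤ f 1 - f 0 := by
  have key := (convex_Icc (0 : ℝ) 1).mul_sub_le_image_sub_of_le_deriv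
    (fun s hs => (hf s hs).continuousAt.continuousWithinAt)
    (fun s hs => (hf s (interior_subset hs)).differentiableAt.differentiableWithinAt)
    (fun s hs => by
      rw [interior_Icc] at hs
      rw [(hf s (Ioo_subset_Icc_self hs)).deriv]
      exact hC s hs)
    0 (left_mem_Icc.2 zero_le_one) 1 (right_mem_Icc.2 zero_le_one) zero_le_one
  simpa using key

theorem Set.ncard_eq_of_forall_exists_dist_lt {X : Type*} [PseudoMetricSpace X] {A B : Set X}
    {r : ℝ} (hAB : ∀ a ∈ A, ∃ b ∈ B, dist a b < r) (hBA : ∀ b ∈ B, ∃ a ∈ A, dist a b < r)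
    (hA : ∀ a ∈ A, ∀ a' ∈ A, dist a a' < 2 * r → a = a')
    (hB : ∀ b ∈ B, ∀ b' ∈ B, dist b b' < 2 * r → b = b') : A.ncard = B.ncard := by
  choose! θ hθB hθ using hAB
  refine Set.ncard_congr (fun a _ => θ a) hθB (fun a a' ha ha' h => hA a ha a' ha' ?_)
    fun b hb => ?_
  · calc dist a a' ≤ dist a (θ a) + dist (θ a') a' := by
          rw [← h]; exact dist_triangle _ _ _
      _ < 2 * r := by rw [dist_comm (θ a')]; linarith [hθ a ha, hθ a' ha']
  · obtain ⟨a, ha, hab⟩ := hBA b hb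
    refine ⟨a, ha, hB _ (hθB a ha) b hb ?_⟩
    calc dist (θ a) b ≤ dist (θ a) a + dist a b := dist_triangle _ _ _
      _ < 2 * r := by rw [dist_comm]; linarith [hθ a ha]

theorem IsCompact.sep_eq_zero {X Y : Type*} [TopologicalSpace X] [T2Space X] [TopologicalSpace Y]
    [T1Space Y] [Zero Y] {E : Set X} {G : X → Y} (hE : IsCompact E) (hG : ContinuousOn G E) :
    IsCompact {x ∈ E | G x = 0} :=
  hE.of_isClosed_subset (hG.preimage_isClosed_of_isClosed hE.isClosed isClosed_singleton)
    (sep_subset _ _)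

theorem IsPreconnected.forall_le_or_forall_le_neg {X : Type*} [TopologicalSpace X] {s : Set X}
    {h : X → ℝ} {η : ℝ} (hs : IsPreconnected s) (hh : ContinuousOn h s) (hη : 0 < η)
    (habs : ∀ x ∈ s, η ≤ |h x|) : (∀ x ∈ s, η ≤ h x) ∨ (∀ x ∈ s, h x ≤ -η) := by
  by_contra! hcon
  obtain ⟨⟨a, ha, hlt⟩, ⟨b, hb, hgt⟩⟩ := hcon
  have ha' : h a ≤ -η := (le_abs'.1 (habs a ha)).resolve_right hlt.not_ge
  have hb' : η ≤ h b := (le_abs'.1 (habs b hb)).resolve_left hgt.not_ge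
  obtain ⟨x, hx, hx0⟩ := hs.intermediate_value ha hb hh
    (show (0 : ℝ) ∈ Icc (h a) (h b) from ⟨by linarith, by linarith⟩)
  have := habs x hx
  rw [hx0, abs_zero] at this
  linarith

variable {F : Type*} [NormedAddCommGroup F] [InnerProductSpace ℝ F]

theorem hasDerivAt_add_smul (x u : F) (s : ℝ) : HasDerivAt (fun s : ℝ => x + s • u) u s := by
  simpa using ((hasDerivAt_id s).smul_const u).const_add x

theorem HasFDerivAt.hasDerivAt_inner_comp_add_smul {G : F → F} {H : F →L[ℝ] F} {x u : F} {s : ℝ}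
    (h : HasFDerivAt G H (x + s • u)) :
    HasDerivAt (fun s : ℝ => ⟪u, G (x + s • u)⟫) ⟪u, H u⟫ s := by
  simpa using (hasDerivAt_const s u).inner ℝ (h.comp_hasDerivAt s (hasDerivAt_add_smul x u s))

theorem HasGradientAt.hasDerivAt_comp_add_smul [CompleteSpace F] {φ : F → ℝ} {g x u : F} {s : ℝ}
    (h : HasGradientAt φ g (x + s • u)) :
    HasDerivAt (fun s : ℝ => φ (x + s • u)) ⟪g, u⟫ s := by
  simpa [Function.comp_def] using h.hasFDerivAt.comp_hasDerivAt s (hasDerivAt_add_smul x u s)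

theorem HasGradientAt.const_mul_add_const_mul [CompleteSpace F] {f g : F → ℝ} {a b x : F}
    (hf : HasGradientAt f a x) (hg : HasGradientAt g b x) (s t : ℝ) :
    HasGradientAt (fun y => s * f y + t * g y) (s • a + t • b) x := by
  rw [hasGradientAt_iff_hasFDerivAt, map_add, map_smul, map_smul]
  exact (hf.hasFDerivAt.const_mul s).add (hg.hasFDerivAt.const_mul t)

def StrongMonotoneOn (c : ℝ) (G : F → F) (U : Set F) : Prop :=
  ∀ x ∈ U, ∀ y ∈ U, c * ‖y - x‖ ^ 2 ≤ ⟪y - x, G y - G x⟫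

section StrongMonotoneOn

variable {c t : ℝ} {G P Q : F → F} {U U' : Set F}

theorem StrongMonotoneOn.mono (h : StrongMonotoneOn c G U) (hU' : U' ⊆ U) :
    StrongMonotoneOn c G U' :=
  fun x hx y hy => h x (hU' hx) y (hU' hy)

theorem Convex.strongMonotoneOn_of_hasFDerivAt {H : F → F →L[ℝ] F} (hU : Convex ℝ U)
    (hG : ∀ z ∈ U, HasFDerivAt G (H z) z) (hH : ∀ z ∈ U, ∀ v, c * ‖v‖ ^ 2 ≤ ⟪v, H z v⟫) :
    StrongMonotoneOn c G U := by
  intro x hx y hy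
  have hseg : ∀ s ∈ Icc (0 : ℝ) 1, x + s • (y - x) ∈ U := fun s hs => hU.add_smul_sub_mem hx hy hs
  have key := le_sub_of_hasDerivAt_of_le (f := fun s => ⟪y - x, G (x + s • (y - x))⟫)
    (fun s hs => (hG _ (hseg s hs)).hasDerivAt_inner_comp_add_smul)
    (fun s hs => hH _ (hseg s (Ioo_subset_Icc_self hs)) (y - x))
  simpa [inner_sub_right] using key

theorem StrongMonotoneOn.smul_add_one_sub_smul (hP : StrongMonotoneOn c P U)
    (hQ : StrongMonotoneOn c Q U) (ht : t ∈ Icc (0 : ℝ) 1) :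
    StrongMonotoneOn c (fun x => t • P x + (1 - t) • Q x) U := by
  intro x hx y hy
  have h : ⟪y - x, (t • P y + (1 - t) • Q y) - (t • P x + (1 - t) • Q x)⟫ =
      t * ⟪y - x, P y - P x⟫ + (1 - t) * ⟪y - x, Q y - Q x⟫ := by
    simp only [inner_add_right, inner_sub_right, real_inner_smul_right]
    ring
  rw [h]
  nlinarith [hP x hx y hy, hQ x hx y hy, ht.1, ht.2]

theorem StrongMonotoneOn.injOn (h : StrongMonotoneOn c G U) (hc : 0 < c) : InjOn G U := by
  intro x hx y hy hxy
  have key := h x hx y hy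
  rw [hxy, sub_self, inner_zero_right] at key
  have : ‖y - x‖ ^ 2 = 0 := le_antisymm (by nlinarith [sq_nonneg ‖y - x‖]) (sq_nonneg _)
  simpa [sub_eq_zero, eq_comm] using this

variable [CompleteSpace F] {φ : F → ℝ} {x x₀ : F} {r : ℝ}

theorem StrongMonotoneOn.isMinOn_of_eq_zero (hG : StrongMonotoneOn 0 G U) (hU : Convex ℝ U)
    (hφ : ∀ z ∈ U, HasGradientAt φ (G z) z) (hx : x ∈ U) (hx0 : G x = 0) : IsMinOn φ U x := by
  intro y hy
  have hseg : ∀ s ∈ Icc (0 : ℝ) 1, x + s • (y - x) ∈ U := fun s hs => hU.add_smul_sub_mem hx hy hs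
  have key := le_sub_of_hasDerivAt_of_le (C := 0) (f := fun s => φ (x + s • (y - x)))
    (fun s hs => (hφ _ (hseg s hs)).hasDerivAt_comp_add_smul) fun s hs => by
      have h := hG x hx _ (hseg s (Ioo_subset_Icc_self hs))
      rw [add_sub_cancel_left, hx0, sub_zero, real_inner_smul_left, zero_mul, real_inner_comm] at h
      exact nonneg_of_mul_nonneg_right h hs.1
  simpa using key

theorem StrongMonotoneOn.isLocalMin_iff (hG : StrongMonotoneOn 0 G U) (hU : Convex ℝ U)
    (hUx : U ∈ 𝓝 x) (hφ : ∀ z ∈ U, HasGradientAt φ (G z) z) : IsLocalMin φ x ↔ G x = 0 := by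
  have hx := mem_of_mem_nhds hUx
  refine ⟨fun h => ?_, fun h => (hG.isMinOn_of_eq_zero hU hφ hx h).isLocalMin hUx⟩
  simpa using h.hasFDerivAt_eq_zero (hφ x hx).hasFDerivAt

theorem StrongMonotoneOn.exists_mem_ball_eq_zero [ProperSpace F]
    (hG : StrongMonotoneOn c G (closedBall x₀ r)) (hc : 0 < c)
    (hφ : ∀ z ∈ closedBall x₀ r, HasGradientAt φ (G z) z) (hsmall : ‖G x₀‖ < c * r) :
    ∃ z ∈ ball x₀ r, G z = 0 := by
  have hr : 0 < r := pos_of_mul_pos_right ((norm_nonneg _).trans_lt hsmall) hc.le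
  have hx₀ : x₀ ∈ closedBall x₀ r := mem_closedBall_self hr.le
  obtain ⟨z, hz, hmin⟩ := (isCompact_closedBall x₀ r).exists_isMinOn ⟨x₀, hx₀⟩
    fun z hz => (hφ z hz).differentiableAt.continuousAt.continuousWithinAt
  have hfoc : 0 ≤ ⟪G z, x₀ - z⟫ := by
    simpa using hmin.localize.hasFDerivWithinAt_nonneg (hφ z hz).hasFDerivAt.hasFDerivWithinAt
      (sub_mem_posTangentConeAt_of_segment_subset ((convex_closedBall x₀ r).segment_subset hz hx₀))
  have hzr : ‖z - x₀‖ < r := by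
    rw [real_inner_comm, ← neg_sub z x₀, inner_neg_left, neg_nonneg] at hfoc
    have hcs := neg_le_of_abs_le (abs_real_inner_le_norm (z - x₀) (G x₀))
    have hmono := hG x₀ hx₀ z hz
    rw [inner_sub_right] at hmono
    -- `c ‖z - x₀‖² ≤ ‖z - x₀‖ ‖G x₀‖ < c r ‖z - x₀‖`
    by_contra! h
    have hd : 0 < ‖z - x₀‖ := hr.trans_le h
    nlinarith [mul_lt_mul_of_pos_left hsmall hd,
      mul_le_mul_of_nonneg_left h (mul_nonneg hc.le hd.le)]
  have hzball : z ∈ ball x₀ r := by rwa [mem_ball, dist_eq_norm]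
  refine ⟨z, hzball, ?_⟩
  simpa using (hmin.isLocalMin (closedBall_mem_nhds_of_mem hzball)).hasFDerivAt_eq_zero
    (hφ z hz).hasFDerivAt

end StrongMonotoneOn

section SecondOrder

variable [CompleteSpace F] {φ : F → ℝ} {G : F → F} {H : F →L[ℝ] F} {x : F}

theorem IsLocalMin.inner_hessian_nonneg (h : IsLocalMin φ x)
    (hφ : ∀ᶠ y in 𝓝 x, HasGradientAt φ (G y) y) (hG : HasFDerivAt G H x) (v : F) :
    0 ≤ ⟪v, H v⟫ := by
  by_contra! hneg
  have hGx : G x = 0 := by simpa using h.hasFDerivAt_eq_zero hφ.self_of_nhds.hasFDerivAt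
  set q : ℝ → ℝ := fun s => ⟪v, G (x + s • v)⟫
  have hq : HasDerivAt q ⟪v, H v⟫ 0 :=
    HasFDerivAt.hasDerivAt_inner_comp_add_smul (by simpa using hG)
  have hsign := eventually_nhdsWithin_sign_eq_of_deriv_neg (hq.deriv ▸ hneg) (by simp [q, hGx])
  have hline : Tendsto (fun s : ℝ => x + s • v) (𝓝 0) (𝓝 x) := by
    simpa using (continuous_const.add (continuous_id.smul continuous_const)).tendsto (0 : ℝ)
      (f := fun s : ℝ => x + s • v)
  obtain ⟨ε, hε, hnear⟩ := Metric.eventually_nhds_iff.1 ((hline.eventually (hφ.and h)).and hsign)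
  have hnear' : ∀ s ∈ Icc (0 : ℝ) (ε / 2), dist s 0 < ε := fun s hs => by
    rw [Real.dist_eq, sub_zero, abs_of_nonneg hs.1]; linarith [hs.2]
  have hderiv : ∀ s ∈ Icc (0 : ℝ) (ε / 2),
      HasDerivAt (fun s : ℝ => φ (x + s • v)) ⟪G (x + s • v), v⟫ s :=
    fun s hs => (hnear (hnear' s hs)).1.1.hasDerivAt_comp_add_smul
  -- mean value theorem: `φ (x + (ε / 2) • v) - φ x = (ε / 2) * q ξ < 0`, some `ξ ∈ (0, ε / 2)`
  obtain ⟨ξ, hξ, hslope⟩ := exists_hasDerivAt_eq_slope (fun s : ℝ => φ (x + s • v))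
    (fun s => ⟪G (x + s • v), v⟫) (half_pos hε)
    (fun s hs => (hderiv s hs).continuousAt.continuousWithinAt)
    (fun s hs => hderiv s (Ioo_subset_Icc_self hs))
  have hqξ : q ξ < 0 := by
    have := (hnear (hnear' ξ (Ioo_subset_Icc_self hξ))).2
    rwa [zero_sub, sign_neg (neg_neg_of_pos hξ.1), sign_eq_neg_one_iff] at this
  have hmin := (hnear (hnear' (ε / 2) (right_mem_Icc.2 (half_pos hε).le))).1.2
  rw [real_inner_comm, eq_div_iff (by linarith)] at hslope
  simp only [zero_smul, add_zero] at hslope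
  nlinarith [hξ.1]

end SecondOrder

section ContDiffTwo

variable [CompleteSpace F] {V : Set F} {f : F → ℝ} {x : F}

theorem ContDiffOn.contDiffOn_gradient (hV : IsOpen V) (hf : ContDiffOn ℝ 2 f V) :
    ContDiffOn ℝ 1 (gradient f) V :=
  (toDual ℝ F).symm.contDiff.comp_contDiffOn (hf.fderiv_of_isOpen hV (by norm_num))

theorem ContDiffOn.hasGradientAt (hV : IsOpen V) (hf : ContDiffOn ℝ 2 f V) (hx : x ∈ V) :
    HasGradientAt f (gradient f x) x :=
  (hf.differentiableOn (by norm_num)).hasGradientAt (hV.mem_nhds hx)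

theorem ContDiffOn.hasFDerivAt_gradient (hV : IsOpen V) (hf : ContDiffOn ℝ 2 f V) (hx : x ∈ V) :
    HasFDerivAt (gradient f) (fderiv ℝ (gradient f) x) x :=
  (((hf.contDiffOn_gradient hV).differentiableOn one_ne_zero).differentiableAt
    (hV.mem_nhds hx)).hasFDerivAt

theorem ContDiffOn.strongMonotoneOn_gradient {c : ℝ} {U : Set F} (hV : IsOpen V)
    (hf : ContDiffOn ℝ 2 f V) (hH : ∀ z ∈ V, ∀ v, c * ‖v‖ ^ 2 ≤ ⟪v, fderiv ℝ (gradient f) z v⟫)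
    (hU : Convex ℝ U) (hUV : U ⊆ V) : StrongMonotoneOn c (gradient f) U :=
  hU.strongMonotoneOn_of_hasFDerivAt (fun _ hz => hf.hasFDerivAt_gradient hV (hUV hz))
    fun z hz => hH z (hUV hz)

theorem ContDiffOn.sep_isLocalMin_eq {E : Set F} (hV : IsOpen V) (hf : ContDiffOn ℝ 2 f V)
    (hH : ∀ z ∈ V, ∀ v, 0 ≤ ⟪v, fderiv ℝ (gradient f) z v⟫) (hEV : E ⊆ V) :
    {x ∈ E | IsLocalMin f x} = {x ∈ E | gradient f x = 0} := by
  ext x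
  refine and_congr_right fun hx => ?_
  obtain ⟨ε, hε, hball⟩ := Metric.isOpen_iff.1 hV x (hEV hx)
  exact (hf.strongMonotoneOn_gradient hV (by simpa using hH) (convex_ball x ε) hball).isLocalMin_iff
    (convex_ball x ε) (ball_mem_nhds x hε) fun z hz => hf.hasGradientAt hV (hball hz)

end ContDiffTwo

section Zeros

variable {E : Set F} {G G₀ : F → F} {c δ : ℝ}

theorem eq_of_eq_zero_of_dist_lt (hG : ∀ y ∈ E, StrongMonotoneOn c G (ball y δ)) (hc : 0 < c)
    {x y : F} (hx : x ∈ E) (hx0 : G x = 0) (hy0 : G y = 0) (hxy : dist y x < δ) : y = x :=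
  (hG x hx).injOn hc hxy (mem_ball_self (dist_nonneg.trans_lt hxy)) (hy0.trans hx0.symm)

theorem IsCompact.finite_sep_eq_zero (hE : IsCompact E) (hG : ContinuousOn G E)
    (hmono : ∀ y ∈ E, StrongMonotoneOn c G (ball y δ)) (hc : 0 < c) (hδ : 0 < δ) :
    {x ∈ E | G x = 0}.Finite := by
  refine (hE.sep_eq_zero hG).finite (isDiscrete_iff_forall_mem_exists_isOpen.2 fun x hx =>
    ⟨ball x δ, isOpen_ball, Subset.antisymm ?_ ?_⟩)
  · rintro y ⟨hy, -, hy0⟩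
    exact eq_of_eq_zero_of_dist_lt hmono hc hx.1 hx.2 hy0 hy
  · rintro y rfl
    exact ⟨mem_ball_self hδ, hx⟩

theorem IsCompact.exists_forall_ncard_sep_eq_zero_eq [ProperSpace F]
    (hE : IsCompact E) (hc : 0 < c) (hδ : 0 < δ) (hG₀ : ContinuousOn G₀ E)
    (hmono₀ : ∀ y ∈ E, StrongMonotoneOn c G₀ (ball y δ)) (hbd : ∀ x ∈ frontier E, G₀ x ≠ 0) :
    ∃ ε > 0, ∀ (G : F → F) (φ : F → ℝ), (∀ y ∈ E, StrongMonotoneOn c G (ball y δ)) →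
      (∀ y ∈ E, ∀ z ∈ ball y δ, HasGradientAt φ (G z) z) → (∀ x ∈ E, ‖G x - G₀ x‖ < ε) →
      {x ∈ E | G x = 0}.ncard = {x ∈ E | G₀ x = 0}.ncard := by
  set Z₀ := {x ∈ E | G₀ x = 0}
  have hZ₀ : Z₀ ⊆ interior E := fun x hx => by
    by_contra h
    exact hbd x ⟨subset_closure hx.1, h⟩ hx.2
  obtain ⟨ρ, hρ, hρE⟩ := (hE.sep_eq_zero hG₀).exists_thickening_subset_open isOpen_interior hZ₀
  set r := min (ρ / 2) (δ / 2)
  have hr : 0 < r := lt_min (half_pos hρ) (half_pos hδ)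
  have hrE : ∀ x ∈ Z₀, closedBall x r ⊆ E := fun x hx =>
    ((closedBall_subset_ball ((min_le_left _ _).trans_lt (half_lt_self hρ))).trans
      (ball_subset_thickening hx ρ)).trans (hρE.trans interior_subset)
  have hrδ : ∀ x : F, closedBall x r ⊆ ball x δ := fun x =>
    closedBall_subset_ball ((min_le_right _ _).trans_lt (half_lt_self hδ))
  have h2r : 2 * r ≤ δ := by linarith [min_le_right (ρ / 2) (δ / 2)]
  obtain ⟨m, hm, hmK⟩ := (hE.diff isOpen_thickening).exists_forall_le' (f := fun x => ‖G₀ x‖)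
    (hG₀.mono sdiff_subset).norm
    fun x hx => norm_pos_iff.2 fun h0 => hx.2 (self_subset_thickening hr Z₀ ⟨hx.1, h0⟩)
  -- `ε ≤ m` keeps the zeros of `G` within `r` of those of `G₀`, and `ε ≤ c * r` lets
  -- `exists_mem_ball_eq_zero` find a zero of `G` within `r` of each zero of `G₀`
  refine ⟨min m (c * r), lt_min hm (mul_pos hc hr), fun G φ hmono hφ hclose => ?_⟩
  refine Set.ncard_eq_of_forall_exists_dist_lt (r := r) (fun z hz => ?_) (fun x hx => ?_)
    (fun z hz z' hz' h => ?_) (fun x hx x' hx' h => ?_)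
  · refine mem_thickening_iff.1 (not_not.1 fun hfar => (hmK z ⟨hz.1, hfar⟩).not_gt ?_)
    simpa [hz.2] using (hclose z hz.1).trans_le (min_le_left _ _)
  · have hsmall : ‖G x‖ < c * r := by
      simpa [hx.2] using (hclose x hx.1).trans_le (min_le_right _ _)
    obtain ⟨z, hz, hz0⟩ := ((hmono x hx.1).mono (hrδ x)).exists_mem_ball_eq_zero hc
      (fun z hz => hφ x hx.1 z (hrδ x hz)) hsmall
    exact ⟨z, ⟨hrE x hx (ball_subset_closedBall hz), hz0⟩, hz⟩
  · exact (eq_of_eq_zero_of_dist_lt hmono hc hz'.1 hz'.2 hz.2 (h.trans_le h2r))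
  · exact (eq_of_eq_zero_of_dist_lt hmono₀ hc hx'.1 hx'.2 hx.2 (h.trans_le h2r))

end Zeros

theorem ncard_sep_eq_zero_eq_of_homotopy [ProperSpace F] {E : Set F}
    {G : ℝ → F → F} {Φ : ℝ → F → ℝ} {c δ M : ℝ} (hE : IsCompact E) (hc : 0 < c) (hδ : 0 < δ)
    (hcont : ∀ t ∈ Icc (0 : ℝ) 1, ContinuousOn (G t) E)
    (hmono : ∀ t ∈ Icc (0 : ℝ) 1, ∀ y ∈ E, StrongMonotoneOn c (G t) (ball y δ))
    (hgrad : ∀ t ∈ Icc (0 : ℝ) 1, ∀ y ∈ E, ∀ z ∈ ball y δ, HasGradientAt (Φ t) (G t z) z)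
    (hlip : ∀ x ∈ E, ∀ s t, ‖G s x - G t x‖ ≤ M * |s - t|)
    (hbd : ∀ t ∈ Icc (0 : ℝ) 1, ∀ x ∈ frontier E, G t x ≠ 0) :
    {x ∈ E | G 1 x = 0}.ncard = {x ∈ E | G 0 x = 0}.ncard := by
  refine isPreconnected_Icc.constant (f := fun t => {x ∈ E | G t x = 0}.ncard)
    (fun t₀ ht₀ => ?_) (right_mem_Icc.2 zero_le_one) (left_mem_Icc.2 zero_le_one)
  rw [ContinuousWithinAt, nhds_discrete, tendsto_pure]
  obtain ⟨ε, hε, hstab⟩ := hE.exists_forall_ncard_sep_eq_zero_eq hc hδ (hcont t₀ ht₀)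
    (hmono t₀ ht₀) (hbd t₀ ht₀)
  have hnear : ∀ᶠ t in 𝓝 t₀, M * |t - t₀| < ε :=
    (Continuous.tendsto' (by fun_prop) t₀ 0 (by simp)).eventually (gt_mem_nhds hε)
  filter_upwards [self_mem_nhdsWithin, nhdsWithin_le_nhds hnear] with t ht htε
  exact hstab (G t) (Φ t) (hmono t ht) (hgrad t ht) fun x hx => (hlip x hx t t₀).trans_lt htε

theorem finite_and_ncard_eq_of_hessian_ge [ProperSpace F] {V E : Set F} {f g : F → ℝ} {c : ℝ}
    (hV : IsOpen V) (hEV : E ⊆ V) (hE : IsCompact E)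
    (hf : ContDiffOn ℝ 2 f V) (hg : ContDiffOn ℝ 2 g V) (hc : 0 < c)
    (hHf : ∀ z ∈ V, ∀ v, c * ‖v‖ ^ 2 ≤ ⟪v, fderiv ℝ (gradient f) z v⟫)
    (hHg : ∀ z ∈ V, ∀ v, c * ‖v‖ ^ 2 ≤ ⟪v, fderiv ℝ (gradient g) z v⟫)
    (hbd : ∀ x ∈ frontier E, ∀ t ∈ Icc (0 : ℝ) 1,
      t • gradient f x + (1 - t) • gradient g x ≠ 0) :
    {x ∈ E | IsLocalMin f x}.Finite ∧ {x ∈ E | IsLocalMin g x}.Finite ∧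
      {x ∈ E | IsLocalMin f x}.ncard = {x ∈ E | IsLocalMin g x}.ncard := by
  set G : ℝ → F → F := fun t x => t • gradient f x + (1 - t) • gradient g x
  have hpsd : ∀ {φ : F → ℝ}, (∀ z ∈ V, ∀ v, c * ‖v‖ ^ 2 ≤ ⟪v, fderiv ℝ (gradient φ) z v⟫) →
      ∀ z ∈ V, ∀ v, 0 ≤ ⟪v, fderiv ℝ (gradient φ) z v⟫ :=
    fun hH z hz v => (by positivity : 0 ≤ c * ‖v‖ ^ 2).trans (hH z hz v)
  have hminf : {x ∈ E | IsLocalMin f x} = {x ∈ E | G 1 x = 0} := by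
    simpa [G] using hf.sep_isLocalMin_eq hV (hpsd hHf) hEV
  have hming : {x ∈ E | IsLocalMin g x} = {x ∈ E | G 0 x = 0} := by
    simpa [G] using hg.sep_isLocalMin_eq hV (hpsd hHg) hEV
  obtain ⟨δ, hδ, hδV⟩ := hE.exists_thickening_subset_open hV hEV
  have hball : ∀ y ∈ E, ball y δ ⊆ V := fun y hy => (ball_subset_thickening hy δ).trans hδV
  have hmono : ∀ t ∈ Icc (0 : ℝ) 1, ∀ y ∈ E, StrongMonotoneOn c (G t) (ball y δ) :=
    fun t ht y hy =>
      (hf.strongMonotoneOn_gradient hV hHf (convex_ball y δ) (hball y hy)).smul_add_one_sub_smul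
        (hg.strongMonotoneOn_gradient hV hHg (convex_ball y δ) (hball y hy)) ht
  have hgrad : ∀ t ∈ Icc (0 : ℝ) 1, ∀ y ∈ E, ∀ z ∈ ball y δ,
      HasGradientAt (fun x => t * f x + (1 - t) * g x) (G t z) z := fun t _ y hy z hz =>
    (hf.hasGradientAt hV (hball y hy hz)).const_mul_add_const_mul
      (hg.hasGradientAt hV (hball y hy hz)) t (1 - t)
  have hf₁ := (hf.contDiffOn_gradient hV).continuousOn.mono hEV
  have hg₁ := (hg.contDiffOn_gradient hV).continuousOn.mono hEV
  have hcont : ∀ t, ContinuousOn (G t) E := fun t => (hf₁.const_smul t).add (hg₁.const_smul (1 - t))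
  obtain ⟨M, hM⟩ := hE.exists_bound_of_continuousOn (hf₁.sub hg₁)
  have hlip : ∀ x ∈ E, ∀ s t, ‖G s x - G t x‖ ≤ M * |s - t| := fun x hx s t => by
    have : G s x - G t x = (s - t) • (gradient f x - gradient g x) := by simp only [G]; module
    rw [this, norm_smul, Real.norm_eq_abs, mul_comm]
    exact mul_le_mul_of_nonneg_right (hM x hx) (abs_nonneg _)
  refine ⟨?_, ?_, ?_⟩
  · rw [hminf]
    exact hE.finite_sep_eq_zero (hcont 1) (hmono 1 (right_mem_Icc.2 zero_le_one)) hc hδ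
  · rw [hming]
    exact hE.finite_sep_eq_zero (hcont 0) (hmono 0 (left_mem_Icc.2 zero_le_one)) hc hδ
  · rw [hminf, hming]
    exact ncard_sep_eq_zero_eq_of_homotopy hE hc hδ (fun t _ => hcont t) hmono hgrad hlip
      fun t ht x hx => hbd x hx t ht

section LambdaMin

variable {n : ℕ} (A B : EuclideanSpace ℝ (Fin n) →L[ℝ] EuclideanSpace ℝ (Fin n))

theorem bddBelow_rayleigh :
    BddBelow {r : ℝ | ∃ v : EuclideanSpace ℝ (Fin n), ‖v‖ = 1 ∧ r = ⟪v, A v⟫} := by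
  refine ⟨-‖A‖, ?_⟩
  rintro r ⟨v, hv, rfl⟩
  have := (abs_real_inner_le_norm v (A v)).trans
    (mul_le_mul_of_nonneg_left (A.le_opNorm v) (norm_nonneg v))
  rw [hv, one_mul, mul_one] at this
  exact neg_le_of_abs_le this

theorem lambdaMin_le_inner {v : EuclideanSpace ℝ (Fin n)} (hv : ‖v‖ = 1) :
    lambdaMin A ≤ ⟪v, A v⟫ :=
  csInf_le (bddBelow_rayleigh A) ⟨v, hv, rfl⟩

theorem lambdaMin_nonneg (h : ∀ v, 0 ≤ ⟪v, A v⟫) : 0 ≤ lambdaMin A :=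
  Real.sInf_nonneg fun _ ⟨v, _, hr⟩ => hr ▸ h v

theorem mul_norm_sq_le_inner_of_le_lambdaMin {c : ℝ} (h : c ≤ lambdaMin A)
    (v : EuclideanSpace ℝ (Fin n)) : c * ‖v‖ ^ 2 ≤ ⟪v, A v⟫ := by
  rcases eq_or_ne v 0 with rfl | hv
  · simp
  have hu := h.trans (lambdaMin_le_inner A (norm_smul_inv_norm (𝕜 := ℝ) hv))
  rw [map_smul, real_inner_smul_left, real_inner_smul_right] at hu
  have hpos : 0 < ‖v‖ := norm_pos_iff.2 hv
  calc c * ‖v‖ ^ 2 ≤ ‖v‖⁻¹ * (‖v‖⁻¹ * ⟪v, A v⟫) * ‖v‖ ^ 2 := by gcongr; simpa using hu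
    _ = ⟪v, A v⟫ := by field_simp

theorem lambdaMin_le_add_norm_sub : lambdaMin A ≤ lambdaMin B + ‖A - B‖ := by
  by_cases h : ∃ v : EuclideanSpace ℝ (Fin n), ‖v‖ = 1
  · obtain ⟨v, hv⟩ := h
    rw [← sub_le_iff_le_add]
    refine le_csInf ⟨_, v, hv, rfl⟩ ?_
    rintro r ⟨w, hw, rfl⟩
    have hAB := (real_inner_le_norm w ((A - B) w)).trans
      (mul_le_mul_of_nonneg_left ((A - B).le_opNorm w) (norm_nonneg w))
    rw [hw, one_mul, mul_one, sub_apply, inner_sub_right] at hAB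
    linarith [lambdaMin_le_inner A hw]
  · simp [lambdaMin, not_exists.1 h]

theorem lipschitzWith_lambdaMin :
    LipschitzWith 1 (lambdaMin : (EuclideanSpace ℝ (Fin n) →L[ℝ] EuclideanSpace ℝ (Fin n)) → ℝ) :=
  LipschitzWith.of_le_add fun A B => by simpa [dist_eq_norm] using lambdaMin_le_add_norm_sub A B

end LambdaMin

section LambdaMinHessian

variable {n : ℕ} {V : Set (EuclideanSpace ℝ (Fin n))} {f : EuclideanSpace ℝ (Fin n) → ℝ}

theorem ContDiffOn.continuousOn_lambdaMin_hessian (hV : IsOpen V) (hf : ContDiffOn ℝ 2 f V) :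
    ContinuousOn (fun x => lambdaMin (fderiv ℝ (gradient f) x)) V :=
  lipschitzWith_lambdaMin.continuous.comp_continuousOn
    ((hf.contDiffOn_gradient hV).continuousOn_fderiv_of_isOpen hV le_rfl)

theorem IsLocalMin.lambdaMin_hessian_nonneg {x : EuclideanSpace ℝ (Fin n)} (h : IsLocalMin f x)
    (hV : IsOpen V) (hf : ContDiffOn ℝ 2 f V) (hx : x ∈ V) :
    0 ≤ lambdaMin (fderiv ℝ (gradient f) x) :=
  lambdaMin_nonneg _ <| h.inner_hessian_nonneg
    (eventually_of_mem (hV.mem_nhds hx) fun _ hy => hf.hasGradientAt hV hy)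
    (hf.hasFDerivAt_gradient hV hx)

end LambdaMinHessian

theorem stmt_2 {n : ℕ} (A₀ : Set (EuclideanSpace ℝ (Fin n))) (hA₀ : IsOpen A₀)
    (E : Set (EuclideanSpace ℝ (Fin n))) (hEsub : E ⊆ A₀)
    (hEconn : IsConnected E) (hEcomp : IsCompact E)
    (f g : EuclideanSpace ℝ (Fin n) → ℝ)
    (hf : ContDiffOn ℝ 2 f A₀) (hg : ContDiffOn ℝ 2 g A₀)
    (η : ℝ) (hη : 0 < η)
    (h1 : ∀ x ∈ frontier E, ∀ t ∈ Icc (0:ℝ) 1,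
      t • gradient f x + (1 - t) • gradient g x ≠ 0)
    (h2 : ∀ x ∈ E, ‖fderiv ℝ (gradient f) x - fderiv ℝ (gradient g) x‖ ≤ η / 2)
    (h3 : ∀ x ∈ E, η ≤ |lambdaMin (fderiv ℝ (gradient g) x)|) :
    {x ∈ E | IsLocalMin f x}.Finite ∧ {x ∈ E | IsLocalMin g x}.Finite ∧
    {x ∈ E | IsLocalMin f x}.ncard = {x ∈ E | IsLocalMin g x}.ncard := by
  set μf := fun x => lambdaMin (fderiv ℝ (gradient f) x)
  set μg := fun x => lambdaMin (fderiv ℝ (gradient g) x)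
  have hfg : ∀ x ∈ E, μf x ≤ μg x + η / 2 := fun x hx =>
    (lambdaMin_le_add_norm_sub _ _).trans (by gcongr; exact h2 x hx)
  have hgf : ∀ x ∈ E, μg x ≤ μf x + η / 2 := fun x hx =>
    (lambdaMin_le_add_norm_sub _ _).trans (by gcongr; rw [norm_sub_rev]; exact h2 x hx)
  rcases hEconn.isPreconnected.forall_le_or_forall_le_neg
    ((hg.continuousOn_lambdaMin_hessian hA₀).mono hEsub) hη h3 with hpos | hneg
  · set V := A₀ ∩ (fun x => min (μf x) (μg x)) ⁻¹' Ioi (η / 4)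
    have hV : IsOpen V := ((hf.continuousOn_lambdaMin_hessian hA₀).inf
      (hg.continuousOn_lambdaMin_hessian hA₀)).isOpen_inter_preimage hA₀ isOpen_Ioi
    have hEV : E ⊆ V := fun x hx => ⟨hEsub hx, show η / 4 < min (μf x) (μg x) from
      lt_min (by linarith [hgf x hx, hpos x hx]) (by linarith [hpos x hx])⟩
    exact finite_and_ncard_eq_of_hessian_ge hV hEV hEcomp (hf.mono inter_subset_left)
      (hg.mono inter_subset_left) (by positivity)
      (fun z hz => mul_norm_sq_le_inner_of_le_lambdaMin _ (lt_min_iff.1 hz.2).1.le)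
      (fun z hz => mul_norm_sq_le_inner_of_le_lambdaMin _ (lt_min_iff.1 hz.2).2.le) h1
  · have hnone : ∀ φ, ContDiffOn ℝ 2 φ A₀ → (∀ x ∈ E, lambdaMin (fderiv ℝ (gradient φ) x) < 0) →
        {x ∈ E | IsLocalMin φ x} = ∅ := fun φ hφ hneg' => eq_empty_of_forall_notMem
      fun x ⟨hx, hmin⟩ => (hneg' x hx).not_ge (hmin.lambdaMin_hessian_nonneg hA₀ hφ (hEsub hx))
    rw [hnone f hf fun x hx => by linarith [hfg x hx, hneg x hx],
      hnone g hg fun x hx => by linarith [hneg x hx]]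
    exact ⟨finite_empty, finite_empty, rfl⟩
end

section
/- Let X ∈ ℝ^{N×N} be symmetric positive semidefinite of rank r with eigenvalues λ₁ ≥ ⋯ ≥ λ_r > 0, let 1 ≤ k ≤ r, assume λ_{k+1} ≤ λ_k/12 (with λ_{k+1} = 0 if k = r), let W_k ∈ ℝ^{N×k} have orthonormal columns that are eigenvectors of X for λ₁,…,λ_k, let Λ_k = diag(λ₁,…,λ_k), U* = W_k Λ_k^{1/2}, and κ = √(λ₁/λ_k). Suppose U ∈ ℝ^{N×k} has full column rank and min_{P ∈ O_k} ‖U − U*P‖_F ≤ 0.2 κ⁻¹ √λ_k. Then for every D ∈ ℝ^{N×k} with DᵀU = UᵀD, one has (1/2)‖UDᵀ + DUᵀ‖_F² + ⟨UUᵀ − X, DDᵀ⟩ ≥ 0.19 λ_k ‖D‖_F². -/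
/-!
Choose an orthogonal `P` with `‖U - U⋆P‖_F ≤ √λ_k / 4` and put `V = U⋆P`. Because `DᵀU` is
symmetric, the form equals `‖UDᵀ‖² + 2‖DᵀU‖² - ‖DᵀV‖² - ⟨X - VVᵀ, DDᵀ⟩`. Every singular value
of `V` is at least `√λ_k`, so `‖UDᵀ‖ ≥ ‖VDᵀ‖ - ‖(U - V)Dᵀ‖ ≥ (3/4)√λ_k ‖D‖`; the triangle
inequality `‖DᵀV‖ ≤ ‖DᵀU‖ + ‖D‖‖U - V‖` gives `2‖DᵀU‖² - ‖DᵀV‖² ≥ -2‖D‖²‖U - V‖²`; and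
`X - VVᵀ = X - U⋆U⋆ᵀ` is the tail of the spectral decomposition of `X`, whose eigenvalues are at
most `λ_{k+1} ≤ λ_k / 12`. Hence the form is at least `(9/16 - 2/16 - 1/12) λ_k ‖D‖²`.
-/

open Matrix

/-- Frobenius norm of a real matrix. -/
noncomputable def frob {m n : Type*} [Fintype m] [Fintype n] (M : Matrix m n ℝ) : ℝ :=
  Real.sqrt (∑ i, ∑ j, (M i j) ^ 2)

/-- Trace (entrywise) inner product of two real matrices. -/
noncomputable def mip {m n : Type*} [Fintype m] [Fintype n] (A B : Matrix m n ℝ) : ℝ :=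
  ∑ i, ∑ j, A i j * B i j

section FrobeniusNorm

attribute [local instance] Matrix.frobeniusNormedAddCommGroup

variable {l m n : Type*} [Fintype l] [Fintype m] [Fintype n]

lemma frob_eq_norm (A : Matrix m n ℝ) : frob A = ‖A‖ := by
  simp [frob, Matrix.frobenius_norm_def, Real.sqrt_eq_rpow, Real.norm_eq_abs]

lemma frob_nonneg (A : Matrix m n ℝ) : 0 ≤ frob A := Real.sqrt_nonneg _

lemma frob_sub_le (A B : Matrix m n ℝ) : frob (A - B) ≤ frob A + frob B := by
  simpa only [frob_eq_norm] using norm_sub_le A B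

lemma frob_mul_le (A : Matrix l m ℝ) (B : Matrix m n ℝ) : frob (A * B) ≤ frob A * frob B := by
  simpa only [frob_eq_norm] using Matrix.frobenius_norm_mul A B

lemma frob_transpose (A : Matrix m n ℝ) : frob Aᵀ = frob A := by
  simpa only [frob_eq_norm] using Matrix.frobenius_norm_transpose A

end FrobeniusNorm

section Trace

variable {m n p : Type*} [Fintype m] [Fintype n] [Fintype p]

lemma mip_eq_trace (A B : Matrix m n ℝ) : mip A B = trace (Aᵀ * B) := by
  simp only [mip, trace, diag, mul_apply, transpose_apply]
  exact Finset.sum_comm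

lemma frob_sq_eq_trace (A : Matrix m n ℝ) : frob A ^ 2 = trace (Aᵀ * A) := by
  rw [frob, Real.sq_sqrt (by positivity), ← mip_eq_trace]
  simp only [mip, sq]

lemma mip_sub_left (A B C : Matrix m n ℝ) : mip (A - B) C = mip A C - mip B C := by
  simp only [mip_eq_trace, transpose_sub, Matrix.sub_mul, trace_sub]

lemma mip_mul_transpose_self (A : Matrix m n ℝ) (D : Matrix m p ℝ) :
    mip (A * Aᵀ) (D * Dᵀ) = frob (Dᵀ * A) ^ 2 := by
  rw [mip_eq_trace, frob_sq_eq_trace]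
  simp only [transpose_mul, transpose_transpose, Matrix.mul_assoc]
  rw [trace_mul_comm]
  simp only [Matrix.mul_assoc]

lemma mip_conj (A : Matrix m n ℝ) (B : Matrix n n ℝ) (D : Matrix m p ℝ) :
    mip (A * B * Aᵀ) (D * Dᵀ) = mip B ((Aᵀ * D) * (Aᵀ * D)ᵀ) := by
  simp only [mip_eq_trace, transpose_mul, transpose_transpose, Matrix.mul_assoc]
  rw [trace_mul_comm]
  simp only [Matrix.mul_assoc]

lemma frob_sq_add_transpose (A : Matrix n n ℝ) :
    frob (A + Aᵀ) ^ 2 = 2 * frob A ^ 2 + 2 * trace (A * A) := by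
  have hT : trace (Aᵀ * Aᵀ) = trace (A * A) := by
    rw [← transpose_mul, trace_transpose]
  have hC : trace (A * Aᵀ) = trace (Aᵀ * A) := trace_mul_comm _ _
  simp only [frob_sq_eq_trace, transpose_add, transpose_transpose, Matrix.add_mul,
    Matrix.mul_add, trace_add, hT, hC]
  ring

lemma frob_mul_of_transpose_mul_self_eq_one [DecidableEq n] {A : Matrix m n ℝ}
    (hA : Aᵀ * A = 1) (M : Matrix n p ℝ) : frob (A * M) = frob M := by
  have h : frob (A * M) ^ 2 = frob M ^ 2 := by
    rw [frob_sq_eq_trace, frob_sq_eq_trace, transpose_mul, Matrix.mul_assoc,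
      ← Matrix.mul_assoc Aᵀ, hA, Matrix.one_mul]
  exact (pow_left_inj₀ (frob_nonneg _) (frob_nonneg _) two_ne_zero).1 h

/-- Bessel's inequality: `D - W Wᵀ D` is orthogonal to the range of `W`. -/
lemma frob_transpose_mul_le [DecidableEq n] {W : Matrix m n ℝ} (hW : Wᵀ * W = 1)
    (D : Matrix m p ℝ) : frob (Wᵀ * D) ≤ frob D := by
  have h : frob (D - W * (Wᵀ * D)) ^ 2 = frob D ^ 2 - frob (Wᵀ * D) ^ 2 := by
    simp only [frob_sq_eq_trace, transpose_sub, transpose_mul, transpose_transpose,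
      Matrix.sub_mul, Matrix.mul_sub, Matrix.mul_assoc, trace_sub]
    rw [← Matrix.mul_assoc Wᵀ W, hW, Matrix.one_mul]
    ring
  exact (pow_le_pow_iff_left₀ (frob_nonneg _) (frob_nonneg _) two_ne_zero).1
    (by nlinarith [sq_nonneg (frob (D - W * (Wᵀ * D)))])

lemma le_frob_diagonal_mul [DecidableEq n] {a : ℝ} {d : n → ℝ} (ha : 0 ≤ a)
    (hd : ∀ i, a ≤ d i) (M : Matrix n p ℝ) : a * frob M ≤ frob (diagonal d * M) := by
  rw [frob, frob, ← Real.sqrt_sq ha, ← Real.sqrt_mul (sq_nonneg a), Finset.mul_sum]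
  refine Real.sqrt_le_sqrt (Finset.sum_le_sum fun i _ => ?_)
  rw [Finset.mul_sum]
  refine Finset.sum_le_sum fun j _ => ?_
  rw [diagonal_mul, mul_pow]
  gcongr
  exact hd i

lemma le_frob_mul_diagonal_mul [DecidableEq n] {A : Matrix m n ℝ} {P : Matrix n n ℝ}
    (hA : Aᵀ * A = 1) (hP : Pᵀ * P = 1) {a : ℝ} {d : n → ℝ} (ha : 0 ≤ a)
    (hd : ∀ i, a ≤ d i) (D : Matrix p n ℝ) : a * frob D ≤ frob (A * diagonal d * P * Dᵀ) := by
  rw [← frob_transpose D, ← frob_mul_of_transpose_mul_self_eq_one hP Dᵀ, Matrix.mul_assoc,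
    Matrix.mul_assoc, frob_mul_of_transpose_mul_self_eq_one hA]
  exact le_frob_diagonal_mul ha hd _

lemma mip_diagonal_mul_transpose_self_le [DecidableEq n] {b : ℝ} {d : n → ℝ}
    (hd : ∀ i, d i ≤ b) (G : Matrix n p ℝ) : mip (diagonal d) (G * Gᵀ) ≤ b * frob G ^ 2 := by
  rw [frob, Real.sq_sqrt (by positivity), Finset.mul_sum]
  simp only [mip, diagonal_apply, ite_mul, zero_mul, Finset.sum_ite_eq, Finset.mem_univ,
    if_true, mul_apply, transpose_apply, ← sq]
  exact Finset.sum_le_sum fun i _ => mul_le_mul_of_nonneg_right (hd i) (by positivity)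

lemma mip_conj_diagonal_le [DecidableEq n] {W : Matrix m n ℝ} (hW : Wᵀ * W = 1) {b : ℝ}
    {d : n → ℝ} (hd : ∀ i, d i ≤ b) (hb : 0 ≤ b) (D : Matrix m p ℝ) :
    mip (W * diagonal d * Wᵀ) (D * Dᵀ) ≤ b * frob D ^ 2 := by
  rw [mip_conj]
  refine (mip_diagonal_mul_transpose_self_le hd _).trans (mul_le_mul_of_nonneg_left ?_ hb)
  exact pow_le_pow_left₀ (frob_nonneg _) (frob_transpose_mul_le hW D) 2

end Trace

section Hessian

variable {m n : Type*} [Fintype m] [Fintype n]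

lemma hessian_form_eq {U D : Matrix m n ℝ} (hD : Dᵀ * U = Uᵀ * D) (V : Matrix m n ℝ)
    (X : Matrix m m ℝ) :
    (1 / 2) * frob (U * Dᵀ + D * Uᵀ) ^ 2 + mip (U * Uᵀ - X) (D * Dᵀ) =
      frob (U * Dᵀ) ^ 2 + 2 * frob (Dᵀ * U) ^ 2 - frob (Dᵀ * V) ^ 2
        - mip (X - V * Vᵀ) (D * Dᵀ) := by
  have hsq : trace (U * Dᵀ * (U * Dᵀ)) = frob (Dᵀ * U) ^ 2 := by
    rw [frob_sq_eq_trace, transpose_mul, transpose_transpose, ← hD, Matrix.mul_assoc,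
      trace_mul_comm]
    simp only [Matrix.mul_assoc]
  have hT : D * Uᵀ = (U * Dᵀ)ᵀ := by rw [transpose_mul, transpose_transpose]
  have hres : mip (U * Uᵀ - X) (D * Dᵀ) =
      mip (U * Uᵀ) (D * Dᵀ) - mip (V * Vᵀ) (D * Dᵀ) - mip (X - V * Vᵀ) (D * Dᵀ) := by
    simp only [mip_sub_left]; ring
  rw [hT, frob_sq_add_transpose, hsq, hres, mip_mul_transpose_self, mip_mul_transpose_self]
  ring

lemma hessian_form_ge {U V D : Matrix m n ℝ} (hD : Dᵀ * U = Uᵀ * D) (X : Matrix m m ℝ)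
    {a δ b : ℝ} (hδa : δ ≤ a) (hV : a * frob D ≤ frob (V * Dᵀ)) (hUV : frob (U - V) ≤ δ)
    (hres : mip (X - V * Vᵀ) (D * Dᵀ) ≤ b * frob D ^ 2) :
    ((a - δ) ^ 2 - 2 * δ ^ 2 - b) * frob D ^ 2 ≤
      (1 / 2) * frob (U * Dᵀ + D * Uᵀ) ^ 2 + mip (U * Uᵀ - X) (D * Dᵀ) := by
  have hUVD : frob (U - V) * frob D ≤ δ * frob D :=
    mul_le_mul_of_nonneg_right hUV (frob_nonneg _)
  have hUD : (a - δ) * frob D ≤ frob (U * Dᵀ) := by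
    have h₁ := frob_sub_le (U * Dᵀ) ((U - V) * Dᵀ)
    have h₂ := frob_mul_le (U - V) Dᵀ
    rw [← Matrix.sub_mul, sub_sub_cancel] at h₁
    rw [frob_transpose] at h₂
    linarith
  have hVD : frob (Dᵀ * V) ≤ frob (Dᵀ * U) + δ * frob D := by
    have h₁ := frob_sub_le (Dᵀ * U) (Dᵀ * (U - V))
    have h₂ := frob_mul_le Dᵀ (U - V)
    rw [← Matrix.mul_sub, sub_sub_cancel] at h₁
    rw [frob_transpose] at h₂
    linarith
  have hUD2 : ((a - δ) * frob D) ^ 2 ≤ frob (U * Dᵀ) ^ 2 :=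
    pow_le_pow_left₀ (mul_nonneg (sub_nonneg.2 hδa) (frob_nonneg _)) hUD 2
  have hVD2 : frob (Dᵀ * V) ^ 2 ≤ (frob (Dᵀ * U) + δ * frob D) ^ 2 :=
    pow_le_pow_left₀ (frob_nonneg _) hVD 2
  rw [hessian_form_eq hD V X]
  nlinarith [sq_nonneg (frob (Dᵀ * U) - δ * frob D)]

end Hessian

lemma transpose_mul_self_submatrix_eq_one {m ι κ : Type*} [Fintype m] [DecidableEq ι]
    [DecidableEq κ] {W : Matrix m ι ℝ} (hW : Wᵀ * W = 1) {e : κ → ι}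
    (he : Function.Injective e) : (W.submatrix id e)ᵀ * W.submatrix id e = 1 := by
  rw [transpose_submatrix, ← submatrix_mul _ _ _ id _ Function.bijective_id, hW,
    submatrix_one _ he]

section Spectral

variable {m ι κ : Type*} [Fintype ι] [Fintype κ] [DecidableEq ι] [DecidableEq κ]

lemma submatrix_mul_diagonal_mul_transpose (W : Matrix m ι ℝ) {e : κ → ι}
    (he : Function.Injective e) (d : ι → ℝ) :
    W.submatrix id e * diagonal (d ∘ e) * (W.submatrix id e)ᵀ =
      W * diagonal (fun i => if i ∈ Finset.univ.image e then d i else 0) * Wᵀ := by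
  ext x y
  rw [mul_apply, mul_apply]
  simp only [mul_diagonal, transpose_apply, submatrix_apply, id, Function.comp]
  rw [← Finset.sum_image (f := fun i => W x i * d i * W y i) he.injOn,
    ← Fintype.sum_extend_by_zero]
  refine Finset.sum_congr rfl fun i _ => ?_
  split_ifs <;> ring

lemma submatrix_mul_sqrt_diagonal_mul_transpose (W : Matrix m ι ℝ) {e : κ → ι}
    (he : Function.Injective e) {lam : ι → ℝ} (hlam : ∀ i, 0 ≤ lam i) {P : Matrix κ κ ℝ}
    (hP : Pᵀ * P = 1) :
    W.submatrix id e * diagonal (fun j => Real.sqrt (lam (e j))) * P *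
        (W.submatrix id e * diagonal (fun j => Real.sqrt (lam (e j))) * P)ᵀ =
      W * diagonal (fun i => if i ∈ Finset.univ.image e then lam i else 0) * Wᵀ := by
  rw [← submatrix_mul_diagonal_mul_transpose W he, transpose_mul, Matrix.mul_assoc,
    ← Matrix.mul_assoc P, mul_eq_one_comm.1 hP, Matrix.one_mul, transpose_mul,
    diagonal_transpose, Matrix.mul_assoc, ← Matrix.mul_assoc (diagonal _),
    diagonal_mul_diagonal, ← Matrix.mul_assoc]
  congr 3
  funext j
  exact Real.mul_self_sqrt (hlam _)

end Spectral

lemma Antitone.le_of_notMem_image_castLE {r k : ℕ} (hkr : k ≤ r) {lam : Fin r → ℝ}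
    (h : Antitone lam) {b : ℝ} (hgap : (if h : k < r then lam ⟨k, h⟩ else 0) ≤ b)
    {i : Fin r} (hi : i ∉ Finset.univ.image (Fin.castLE hkr)) : lam i ≤ b := by
  have hki : k ≤ i := by
    by_contra! hik
    exact hi (Finset.mem_image.2 ⟨⟨i, hik⟩, Finset.mem_univ _, rfl⟩)
  have hkr' : k < r := hki.trans_lt i.isLt
  rw [dif_pos hkr'] at hgap
  exact (h (show (⟨k, hkr'⟩ : Fin r) ≤ i from hki)).trans hgap

lemma exists_orthogonal_frob_sub_lt {m n : Type*} [Fintype m] [Fintype n] [DecidableEq n]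
    (U V : Matrix m n ℝ) {t : ℝ}
    (h : sInf {s : ℝ | ∃ P : Matrix n n ℝ, Pᵀ * P = 1 ∧ s = frob (U - V * P)} < t) :
    ∃ P : Matrix n n ℝ, Pᵀ * P = 1 ∧ frob (U - V * P) < t := by
  have hne : {s : ℝ | ∃ P : Matrix n n ℝ, Pᵀ * P = 1 ∧ s = frob (U - V * P)}.Nonempty :=
    ⟨_, 1, by rw [transpose_one, Matrix.one_mul], rfl⟩
  obtain ⟨_, ⟨P, hP, rfl⟩, hlt⟩ := exists_lt_of_csInf_lt hne h
  exact ⟨P, hP, hlt⟩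

theorem stmt_8 {N r k : ℕ} (hk1 : 1 ≤ k) (hkr : k ≤ r)
    (W : Matrix (Fin N) (Fin r) ℝ) (lam : Fin r → ℝ)
    (hW : Wᵀ * W = 1) (hpos : ∀ i, 0 < lam i)
    (hdesc : ∀ i j : Fin r, i ≤ j → lam j ≤ lam i)
    (X : Matrix (Fin N) (Fin N) ℝ) (hX : X = W * diagonal lam * Wᵀ)
    (hgap : (if h : k < r then lam ⟨k, h⟩ else 0) ≤ lam ⟨k - 1, by omega⟩ / 12)
    (Ustar : Matrix (Fin N) (Fin k) ℝ)
    (hUstar : Ustar = W.submatrix id (Fin.castLE hkr) *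
      diagonal (fun j : Fin k => Real.sqrt (lam (Fin.castLE hkr j))))
    (κ : ℝ) (hκ : κ = Real.sqrt (lam ⟨0, by omega⟩ / lam ⟨k - 1, by omega⟩))
    (U : Matrix (Fin N) (Fin k) ℝ)
    (hnear : sInf {t : ℝ | ∃ P : Matrix (Fin k) (Fin k) ℝ,
        Pᵀ * P = 1 ∧ t = frob (U - Ustar * P)} ≤
      0.2 * κ⁻¹ * Real.sqrt (lam ⟨k - 1, by omega⟩))
    (D : Matrix (Fin N) (Fin k) ℝ) (hD : Dᵀ * U = Uᵀ * D) :
    0.19 * lam ⟨k - 1, by omega⟩ * frob D ^ 2 ≤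
      (1 / 2) * frob (U * Dᵀ + D * Uᵀ) ^ 2 + mip (U * Uᵀ - X) (D * Dᵀ) := by
  set c := lam ⟨k - 1, by omega⟩
  have hanti : Antitone lam := fun i j => hdesc i j
  have hc : 0 < c := hpos _
  have hκ1 : 1 ≤ κ := by
    rw [hκ, Real.one_le_sqrt, one_le_div hc]
    exact hanti (show (⟨0, by omega⟩ : Fin r) ≤ ⟨k - 1, by omega⟩ from Nat.zero_le _)
  obtain ⟨P, hP, hUP⟩ := exists_orthogonal_frob_sub_lt U Ustar (t := Real.sqrt c / 4) <| by
    calc _ ≤ 0.2 * κ⁻¹ * Real.sqrt c := hnear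
      _ ≤ 0.2 * 1 * Real.sqrt c := by gcongr; exact inv_le_one_of_one_le₀ hκ1
      _ < Real.sqrt c / 4 := by linarith [Real.sqrt_pos.2 hc]
  have hV : Real.sqrt c * frob D ≤ frob (Ustar * P * Dᵀ) := by
    rw [hUstar]
    refine le_frob_mul_diagonal_mul (transpose_mul_self_submatrix_eq_one hW
      (Fin.castLE_injective hkr)) hP (Real.sqrt_nonneg _) (fun j => ?_) D
    exact Real.sqrt_le_sqrt (hanti (show Fin.castLE hkr j ≤ ⟨k - 1, by omega⟩ by
      simp only [Fin.le_def, Fin.val_castLE]; omega))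
  have hres : mip (X - Ustar * P * (Ustar * P)ᵀ) (D * Dᵀ) ≤ c / 12 * frob D ^ 2 := by
    rw [hX, hUstar, submatrix_mul_sqrt_diagonal_mul_transpose W (Fin.castLE_injective hkr)
      (fun i => (hpos i).le) hP, ← Matrix.sub_mul, ← Matrix.mul_sub, diagonal_sub]
    refine mip_conj_diagonal_le hW (fun i => ?_) (by positivity) D
    split_ifs with hi
    · linarith
    · simpa using hanti.le_of_notMem_image_castLE hkr hgap hi
  have key := hessian_form_ge hD X (by linarith [Real.sqrt_nonneg c]) hV hUP.le hres
  nlinarith [frob_nonneg D, Real.sq_sqrt hc.le]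
end
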